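/- Let G be a digraph and let P be an extreme colouring of G (optimal with the minimum number of singleton classes). Let U be the union of all colour classes of P of size 1 or 2, and let H be the undirected graph on U with edges uv whenever not both (u,v) and (v,u) are arcs of G. Then the restriction of P to U corresponds to a maximum matching of H, and hence χ(G[U]) = |U| − ν(H). -/

import Mathlib

open Finset

/-- A finite vertex subset is acyclic in the digraph with arc relation `E`
if it induces no directed cycle. -/
def DiAcyclic {V : Type*} (E : V → V → Prop) (S : Finset V) : Prop :=
  ∀ v ∈ S, ¬ Relation.TransGen (fun a b => a ∈ S ∧ b ∈ S ∧ E a b) v v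

/-- A colouring of a digraph: a partition of the vertex set into acyclic sets. -/
def IsDiColoring {V : Type*} [Fintype V] [DecidableEq V] (E : V → V → Prop)
    (P : Finpartition (Finset.univ : Finset V)) : Prop :=
  ∀ S ∈ P.parts, DiAcyclic E S

/-- The dichromatic number. -/
noncomputable def dichi (V : Type*) [Fintype V] [DecidableEq V] (E : V → V → Prop) : ℕ :=
  sInf {n | ∃ P : Finpartition (Finset.univ : Finset V), IsDiColoring E P ∧ P.parts.card = n}

/-- Induced subdigraph relation on a vertex subset. -/
def inducedRel {V : Type*} (E : V → V → Prop) (U : Finset V) : ↥U → ↥U → Prop :=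
  fun a b => E a.1 b.1

/-- `k`-vertex-critical digraph. -/
def VertexCritical {V : Type*} [Fintype V] [DecidableEq V] (E : V → V → Prop) (k : ℕ) : Prop :=
  dichi V E = k ∧ ∀ U : Finset V, U ⊂ Finset.univ → dichi ↥U (inducedRel E U) < k

/-- Complement digraph. -/
def diCompl {V : Type*} (E : V → V → Prop) : V → V → Prop :=
  fun a b => a ≠ b ∧ ¬ E a b

/-- Underlying undirected graph of a digraph. -/
def underlying {V : Type*} (E : V → V → Prop) : SimpleGraph V where
  Adj a b := a ≠ b ∧ (E a b ∨ E b a)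
  symm := ⟨fun a b ⟨h1, h2⟩ => ⟨h1.symm, h2.symm⟩⟩
  loopless := ⟨fun a ⟨h, _⟩ => h rfl⟩

/-- Number of singleton colour classes. -/
def numSingle {V : Type*} [Fintype V] [DecidableEq V]
    (P : Finpartition (Finset.univ : Finset V)) : ℕ :=
  (P.parts.filter fun S => S.card = 1).card

/-- Extreme colouring: optimal with fewest singleton classes. -/
def Extreme {V : Type*} [Fintype V] [DecidableEq V] (E : V → V → Prop)
    (P : Finpartition (Finset.univ : Finset V)) : Prop :=
  IsDiColoring E P ∧ P.parts.card = dichi V E ∧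
    ∀ Q : Finpartition (Finset.univ : Finset V),
      IsDiColoring E Q → Q.parts.card = dichi V E → numSingle P ≤ numSingle Q

/-- Maximum matching of a simple graph. -/
def IsMaxMatching {V : Type*} (H : SimpleGraph V) (M : H.Subgraph) : Prop :=
  M.IsMatching ∧ ∀ M' : H.Subgraph, M'.IsMatching → M'.edgeSet.ncard ≤ M.edgeSet.ncard

/-- Matching number. -/
noncomputable def matchNum {V : Type*} (H : SimpleGraph V) : ℕ :=
  sSup {n | ∃ M : H.Subgraph, M.IsMatching ∧ M.edgeSet.ncard = n}

/-- The set `D(H)` of vertices missed by at least one maximum matching. -/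
def GED {V : Type*} (H : SimpleGraph V) : Set V :=
  {v | ∃ M : H.Subgraph, IsMaxMatching H M ∧ v ∉ M.verts}

/-- The set `A(H)`. -/
def GEA {V : Type*} (H : SimpleGraph V) : Set V :=
  {v | v ∉ GED H ∧ ∃ u ∈ GED H, H.Adj v u}

/-- The set `C(H)`. -/
def GEC {V : Type*} (H : SimpleGraph V) : Set V :=
  {v | v ∉ GED H ∧ v ∉ GEA H}

/-- The auxiliary undirected graph on `U`: `u ~ v` iff `{u,v}` is acyclic in the digraph,
i.e. not both arcs `(u,v)`, `(v,u)` are present. -/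
def auxGraph {V : Type*} (E : V → V → Prop) (U : Finset V) : SimpleGraph ↥U where
  Adj a b := a ≠ b ∧ ¬ (E a.1 b.1 ∧ E b.1 a.1)
  symm := ⟨fun a b ⟨h1, h2⟩ => ⟨h1.symm, fun hc => h2 ⟨hc.2, hc.1⟩⟩⟩
  loopless := ⟨fun a ⟨h, _⟩ => h rfl⟩


/-!
Restricting an optimal colouring `P` to a union `U` of its classes gives an optimal colouring of
`G[U]`: a better one, together with the remaining classes of `P`, would beat `χ(G)`. Colourings
of `G[U]` with classes of size at most two are matchings of `H`: a matching with `m` edges gives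
`|U| - m` colours, so `χ(G[U]) + ν(H) ≤ |U|`, while the two-element classes of `P` form a matching
with `|U| - χ(G[U])` edges, which is therefore maximum.
-/

section DiAcyclic

variable {V W : Type*} {E : V → V → Prop}

theorem DiAcyclic.mono {S T : Finset V} (hT : DiAcyclic E T) (hST : S ⊆ T) : DiAcyclic E S :=
  fun v hv hcyc => hT v (hST hv)
    (Relation.TransGen.mono (fun _ _ ⟨ha, hb, h⟩ => ⟨hST ha, hST hb, h⟩) _ _ hcyc)

theorem DiAcyclic.not_rel_self {S : Finset V} (hS : DiAcyclic E S) {v : V} (hv : v ∈ S) :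
    ¬E v v :=
  fun h => hS v hv (.single ⟨hv, hv, h⟩)

theorem DiAcyclic.not_rel_and_rel {S : Finset V} (hS : DiAcyclic E S) {a b : V} (ha : a ∈ S)
    (hb : b ∈ S) : ¬(E a b ∧ E b a) :=
  fun ⟨hab, hba⟩ => hS a ha (.tail (.single ⟨ha, hb, hab⟩) ⟨hb, ha, hba⟩)

theorem diAcyclic_pair [DecidableEq V] (hE : ∀ v, ¬E v v) {a b : V} (hab : ¬(E a b ∧ E b a)) :
    DiAcyclic E {a, b} := by
  let r x y := x ∈ ({a, b} : Finset V) ∧ y ∈ ({a, b} : Finset V) ∧ E x y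
  -- Vacuously transitive: without loops and 2-cycles no path of length two stays in `{a, b}`.
  have : IsTrans V r := ⟨by
    rintro x y z ⟨hx, hy, hxy⟩ ⟨-, hz, hyz⟩
    simp only [mem_insert, mem_singleton] at hx hy hz
    exfalso
    rcases hx with rfl | rfl <;> rcases hy with rfl | rfl <;> rcases hz with rfl | rfl <;>
      first
        | exact hE _ hxy
        | exact hE _ hyz
        | exact hab ⟨hxy, hyz⟩
        | exact hab ⟨hyz, hxy⟩⟩
  intro v _ hcyc
  exact hE v (Relation.transGen_eq_self (r := r) ▸ hcyc).2.2

theorem diAcyclic_singleton [DecidableEq V] (hE : ∀ v, ¬E v v) (v : V) : DiAcyclic E {v} := by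
  simpa using diAcyclic_pair hE (a := v) (b := v) fun h => hE v h.1

theorem DiAcyclic.comap {S : Finset V} (hS : DiAcyclic E S) (f : W → V) {T : Finset W}
    (hT : ∀ x ∈ T, f x ∈ S) : DiAcyclic (fun x y => E (f x) (f y)) T :=
  fun v hv hcyc => hS (f v) (hT v hv)
    (Relation.TransGen.lift f (fun _ _ ⟨hx, hy, h⟩ => ⟨hT _ hx, hT _ hy, h⟩) _ _ hcyc)

theorem DiAcyclic.map (f : W ↪ V) {T : Finset W} (hT : DiAcyclic (fun x y => E (f x) (f y)) T) :
    DiAcyclic E (T.map f) := by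
  intro v hv hcyc
  obtain ⟨w, hw, rfl⟩ := mem_map.1 hv
  have : Nonempty W := ⟨w⟩
  have hg : ∀ a ∈ T.map f, Function.invFun f a ∈ T ∧ f (Function.invFun f a) = a := by
    intro _ ha
    obtain ⟨x, hx, rfl⟩ := mem_map.1 ha
    rw [Function.leftInverse_invFun f.injective x]
    exact ⟨hx, rfl⟩
  have := Relation.TransGen.lift (p := fun x y => x ∈ T ∧ y ∈ T ∧ E (f x) (f y))
    (Function.invFun f) (fun a b ⟨ha, hb, h⟩ =>
    ⟨(hg a ha).1, (hg b hb).1, by rwa [(hg a ha).2, (hg b hb).2]⟩) _ _ hcyc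
  rw [Function.onFun, Function.leftInverse_invFun f.injective w] at this
  exact hT w hw this

end DiAcyclic

theorem SimpleGraph.Subgraph.IsMatching.ncard_verts {V : Type*} [Finite V] {G : SimpleGraph V}
    {M : G.Subgraph} (hM : M.IsMatching) : M.verts.ncard = 2 * M.edgeSet.ncard := by
  have := Fintype.ofFinite M.edgeSet
  have hfiber : ∀ e, Nat.card {x // hM.toEdge x = e} = 2 := by
    rintro ⟨e, he⟩
    induction e using Sym2.ind with | _ u v => ?_
    change Nat.card ↥(hM.toEdge ⁻¹' {⟨s(u, v), he⟩}) = 2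
    rw [hM.toEdge_preimage_singleton he, Nat.card_coe_set_eq, Set.ncard_pair]
    exact fun h => (M.adj_sub he).ne (congrArg Subtype.val h)
  rw [← Nat.card_coe_set_eq, ← Nat.card_coe_set_eq,
    ← Nat.card_congr (Equiv.sigmaFiberEquiv hM.toEdge), Nat.card_sigma]
  simp [hfiber, mul_comm]

section Coloring

variable {V : Type*} [Fintype V] [DecidableEq V] {E : V → V → Prop}

theorem IsDiColoring.not_rel_self {P : Finpartition (univ : Finset V)} (hP : IsDiColoring E P)
    (v : V) : ¬E v v :=
  (hP _ (P.part_mem.2 (mem_univ v))).not_rel_self (P.mem_part (mem_univ v))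

theorem isDiColoring_bot (hE : ∀ v, ¬E v v) : IsDiColoring E ⊥ := by
  intro S hS
  obtain ⟨a, -, rfl⟩ := Finpartition.mem_bot_iff.1 hS
  exact diAcyclic_singleton hE a

theorem dichi_le_card_parts {P : Finpartition (univ : Finset V)} (hP : IsDiColoring E P) :
    dichi V E ≤ #P.parts :=
  Nat.sInf_le ⟨P, hP, rfl⟩

theorem exists_isDiColoring_card_parts_eq_dichi (hE : ∀ v, ¬E v v) :
    ∃ P : Finpartition (univ : Finset V), IsDiColoring E P ∧ #P.parts = dichi V E :=
  Nat.sInf_mem (s := {n | ∃ P : Finpartition (univ : Finset V), IsDiColoring E P ∧ #P.parts = n})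
    ⟨_, ⊥, isDiColoring_bot hE, rfl⟩

theorem dichi_le_card_image (c : V → Finset V) (hmem : ∀ v, v ∈ c v)
    (hc : ∀ v, DiAcyclic E (c v)) : dichi V E ≤ #(univ.image c) := by
  let _ : DecidableRel (Setoid.ker c) := fun a b => decEq (c a) (c b)
  let Q := Finpartition.ofSetoid (Setoid.ker c)
  have hQ : Q.parts = (univ.image c).image fun S => ({w | S = c w} : Finset V) := by
    rw [image_image]; rfl
  have hcol : IsDiColoring E Q := by
    intro S hS
    rw [hQ, image_image] at hS
    obtain ⟨v, -, rfl⟩ := mem_image.1 hS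
    exact (hc v).mono fun w hw => (mem_filter.1 hw).2 ▸ hmem w
  exact (dichi_le_card_parts hcol).trans (hQ ▸ card_image_le)

theorem dichi_induced_le {P : Finpartition (univ : Finset V)} (hP : IsDiColoring E P)
    (U : Finset V) : dichi U (inducedRel E U) ≤ #{S ∈ P.parts | ¬Disjoint S U} := by
  let g : Finset V → Finset U := fun S => S.subtype (· ∈ U)
  have hsub : univ.image (fun w : U => g (P.part w.1)) ⊆ {S ∈ P.parts | ¬Disjoint S U}.image g := by
    intro _ h
    obtain ⟨w, -, rfl⟩ := mem_image.1 h
    exact mem_image_of_mem g (mem_filter.2 ⟨P.part_mem.2 (mem_univ _),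
      not_disjoint_iff.2 ⟨w.1, P.mem_part (mem_univ _), w.2⟩⟩)
  calc dichi U (inducedRel E U) ≤ #(univ.image fun w : U => g (P.part w.1)) :=
        dichi_le_card_image _ (fun w => mem_subtype.2 (P.mem_part (mem_univ _)))
          fun w => (hP _ (P.part_mem.2 (mem_univ _))).comap Subtype.val fun _ hx => mem_subtype.1 hx
    _ ≤ #({S ∈ P.parts | ¬Disjoint S U}.image g) := card_le_card hsub
    _ ≤ _ := card_image_le

theorem dichi_le_dichi_add_dichi_compl (hE : ∀ v, ¬E v v) (U : Finset V) :
    dichi V E ≤ dichi U (inducedRel E U) + dichi ↥Uᶜ (inducedRel E Uᶜ) := by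
  obtain ⟨Q, hQ, hQcard⟩ := exists_isDiColoring_card_parts_eq_dichi (E := inducedRel E U)
    fun v => hE v.1
  obtain ⟨R, hR, hRcard⟩ := exists_isDiColoring_card_parts_eq_dichi (E := inducedRel E Uᶜ)
    fun v => hE v.1
  let c : V → Finset V := fun v =>
    if h : v ∈ U then (Q.part ⟨v, h⟩).map (.subtype _)
    else (R.part ⟨v, mem_compl.2 h⟩).map (.subtype _)
  have hsub : univ.image c ⊆
      Q.parts.image (map (.subtype _)) ∪ R.parts.image (map (.subtype _)) := by
    intro _ h
    obtain ⟨v, -, rfl⟩ := mem_image.1 h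
    by_cases hv : v ∈ U
    · simp only [c, dif_pos hv]
      exact mem_union_left _ (mem_image_of_mem _ (Q.part_mem.2 (mem_univ _)))
    · simp only [c, dif_neg hv]
      exact mem_union_right _ (mem_image_of_mem _ (R.part_mem.2 (mem_univ _)))
  rw [← hQcard, ← hRcard]
  calc dichi V E ≤ #(univ.image c) := by
        refine dichi_le_card_image c (fun v => ?_) fun v => ?_
        · by_cases hv : v ∈ U
          · simpa [c, hv] using Q.mem_part (mem_univ _)
          · simpa [c, hv] using R.mem_part (mem_univ _)
        · by_cases hv : v ∈ U
          · simpa [c, hv] using (hQ _ (Q.part_mem.2 (mem_univ _))).map (.subtype _)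
          · simpa [c, hv] using (hR _ (R.part_mem.2 (mem_univ _))).map (.subtype _)
    _ ≤ _ := (card_le_card hsub).trans ((card_union_le _ _).trans
        (add_le_add card_image_le card_image_le))

theorem dichi_add_ncard_edgeSet_le (hE : ∀ v, ¬E v v) {H : SimpleGraph V}
    (hH : ∀ a b, H.Adj a b → ¬(E a b ∧ E b a)) {M : H.Subgraph} (hM : M.IsMatching) :
    dichi V E + M.edgeSet.ncard ≤ Fintype.card V := by
  classical
  let c : V → Finset V := fun v =>
    if h : v ∈ M.verts then (hM.toEdge ⟨v, h⟩ : Sym2 V).toFinset else {v}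
  have hedge : ∀ e ∈ M.edgeSet, DiAcyclic E e.toFinset := by
    intro e he
    induction e using Sym2.ind with | _ a b => ?_
    rw [Sym2.toFinset_mk_eq]
    exact diAcyclic_pair hE (hH a b (M.adj_sub he))
  have hsub : univ.image c ⊆
      M.edgeSet.toFinset.image Sym2.toFinset ∪ M.vertsᶜ.toFinset.image singleton := by
    intro _ h
    obtain ⟨v, -, rfl⟩ := mem_image.1 h
    by_cases hv : v ∈ M.verts
    · simp only [c, dif_pos hv]
      exact mem_union_left _ (mem_image_of_mem _ (Set.mem_toFinset.2 (hM.toEdge _).2))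
    · simp only [c, dif_neg hv]
      exact mem_union_right _ (mem_image_of_mem _ (Set.mem_toFinset.2 hv))
  have hc : dichi V E ≤ #(univ.image c) := by
    refine dichi_le_card_image c (fun v => ?_) fun v => ?_
    · by_cases hv : v ∈ M.verts
      · simpa [c, hv] using hM.mem_coe_toEdge hv
      · simp [c, hv]
    · by_cases hv : v ∈ M.verts
      · simpa [c, hv] using hedge _ (hM.toEdge ⟨v, hv⟩).2
      · simpa [c, hv] using diAcyclic_singleton hE v
  have hverts := hM.ncard_verts
  have hcompl : #M.vertsᶜ.toFinset = Fintype.card V - M.verts.ncard := by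
    rw [← Set.ncard_eq_toFinset_card', Set.ncard_compl, Nat.card_eq_fintype_card]
  have := (card_le_card hsub).trans ((card_union_le _ _).trans
    (add_le_add card_image_le card_image_le))
  rw [← Set.ncard_eq_toFinset_card', hcompl] at this
  have := Set.ncard_le_card M.verts
  rw [Nat.card_eq_fintype_card] at this
  omega

end Coloring

theorem matchNum_eq_ncard_edgeSet {V : Type*} {H : SimpleGraph V} {M : H.Subgraph}
    (hM : IsMaxMatching H M) : matchNum H = M.edgeSet.ncard :=
  IsGreatest.csSup_eq ⟨⟨M, hM.1, rfl⟩, by rintro _ ⟨M', hM', rfl⟩; exact hM.2 M' hM'⟩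

section UnionOfParts

variable {V : Type*} [Fintype V] [DecidableEq V] {E : V → V → Prop}
  {P : Finpartition (Finset.univ : Finset V)} {U : Finset V}

theorem dichi_induced_eq_card_filter (hP : IsDiColoring E P) (hopt : #P.parts = dichi V E)
    (p : Finset V → Prop) [DecidablePred p] (hU : ∀ v, v ∈ U ↔ ∃ S ∈ P.parts, v ∈ S ∧ p S) :
    dichi U (inducedRel E U) = #{S ∈ P.parts | p S} := by
  have hin : ∀ S ∈ P.parts, ∀ v ∈ S, (v ∈ U ↔ p S) := fun S hS v hv =>
    ⟨fun h => by obtain ⟨S', hS', hvS', hp⟩ := (hU v).1 h; rwa [P.eq_of_mem_parts hS hS' hv hvS'],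
      fun h => (hU v).2 ⟨S, hS, hv, h⟩⟩
  have hle : dichi U (inducedRel E U) ≤ #{S ∈ P.parts | p S} := by
    refine (dichi_induced_le hP U).trans (card_le_card (monotone_filter_right _ ?_))
    intro S hS hmeet
    obtain ⟨v, hvS, hvU⟩ := not_disjoint_iff.1 hmeet
    exact (hin S hS v hvS).1 hvU
  have hcompl : dichi ↥Uᶜ (inducedRel E Uᶜ) ≤ #{S ∈ P.parts | ¬p S} := by
    refine (dichi_induced_le hP Uᶜ).trans (card_le_card (monotone_filter_right _ ?_))
    intro S hS hmeet
    obtain ⟨v, hvS, hvU⟩ := not_disjoint_iff.1 hmeet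
    exact fun h => mem_compl.1 hvU ((hin S hS v hvS).2 h)
  have := dichi_le_dichi_add_dichi_compl hP.not_rel_self U
  have := card_filter_add_card_filter_not (s := P.parts) fun S => p S
  omega

variable (P U) in
def samePartSubgraph (hP : IsDiColoring E P) : (auxGraph E U).Subgraph where
  verts := {a | ∃ b, a ≠ b ∧ ∃ S ∈ P.parts, a.1 ∈ S ∧ b.1 ∈ S}
  Adj a b := a ≠ b ∧ ∃ S ∈ P.parts, a.1 ∈ S ∧ b.1 ∈ S
  adj_sub := fun ⟨hab, S, hS, ha, hb⟩ => ⟨hab, (hP S hS).not_rel_and_rel ha hb⟩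
  edge_vert := fun h => ⟨_, h⟩
  symm := ⟨fun _ _ ⟨hab, S, hS, ha, hb⟩ => ⟨hab.symm, S, hS, hb, ha⟩⟩

theorem isMatching_samePartSubgraph (hP : IsDiColoring E P)
    (hU : ∀ v, v ∈ U ↔ ∃ S ∈ P.parts, v ∈ S ∧ #S ≤ 2) :
    (samePartSubgraph P U hP).IsMatching := by
  intro a ha
  obtain ⟨b, hab, S, hS, ha, hb⟩ : ∃ b, a ≠ b ∧ ∃ S ∈ P.parts, a.1 ∈ S ∧ b.1 ∈ S := ha
  refine ⟨b, ⟨hab, S, hS, ha, hb⟩, fun c hc => ?_⟩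
  obtain ⟨hac, S', hS', ha', hc⟩ : a ≠ c ∧ ∃ S ∈ P.parts, a.1 ∈ S ∧ c.1 ∈ S := hc
  obtain rfl := P.eq_of_mem_parts hS' hS ha' ha
  obtain ⟨T, hT, haT, hT2⟩ := (hU a).1 a.2
  obtain rfl := P.eq_of_mem_parts hT hS' haT ha'
  by_contra hcb
  have := two_lt_card_iff.2 ⟨a.1, b.1, c.1, ha, hb, hc, Subtype.val_injective.ne hab,
    Subtype.val_injective.ne hac, Subtype.val_injective.ne (Ne.symm hcb)⟩
  omega

theorem card_le_card_filter_add_ncard_edgeSet (hP : IsDiColoring E P)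
    (hU : ∀ v, v ∈ U ↔ ∃ S ∈ P.parts, v ∈ S ∧ #S ≤ 2) :
    #U ≤ #{S ∈ P.parts | #S ≤ 2} + (samePartSubgraph P U hP).edgeSet.ncard := by
  set smalls := {S ∈ P.parts | #S ≤ 2}
  have hUeq : U = smalls.biUnion id := by
    ext v
    simp only [hU, smalls, mem_biUnion, mem_filter, id]
    exact ⟨fun ⟨S, hS, hv, h2⟩ => ⟨S, ⟨hS, h2⟩, hv⟩, fun ⟨S, ⟨hS, h2⟩, hv⟩ => ⟨S, hS, hv, h2⟩⟩
  have hpairs : ↑{S ∈ smalls | #S = 2} ⊆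
      (fun e => (e.map Subtype.val).toFinset) '' (samePartSubgraph P U hP).edgeSet := by
    intro S hS
    obtain ⟨hSP, hS2⟩ := mem_filter.1 hS
    obtain ⟨x, y, hxy, rfl⟩ := card_eq_two.1 hS2
    have hx : x ∈ U := (hU x).2 ⟨_, (mem_filter.1 hSP).1, by simp, by omega⟩
    have hy : y ∈ U := (hU y).2 ⟨_, (mem_filter.1 hSP).1, by simp, by omega⟩
    exact ⟨s(⟨x, hx⟩, ⟨y, hy⟩), show _ ∧ _ from ⟨fun h => hxy (congrArg Subtype.val h), _,
      (mem_filter.1 hSP).1, by simp, by simp⟩, by simp [Sym2.toFinset_mk_eq]⟩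
  calc #U = ∑ S ∈ smalls, #S := by
        rw [hUeq, card_biUnion]
        · rfl
        · exact fun S hS T hT => P.disjoint (mem_filter.1 hS).1 (mem_filter.1 hT).1
    _ ≤ ∑ S ∈ smalls, (1 + if #S = 2 then 1 else 0) := by
        refine sum_le_sum fun S hS => ?_
        have := card_pos.2 (P.nonempty_of_mem_parts (mem_filter.1 hS).1)
        have := (mem_filter.1 hS).2
        split_ifs <;> omega
    _ = #smalls + #{S ∈ smalls | #S = 2} := by
        rw [sum_add_distrib, sum_boole, card_eq_sum_ones]
        simp
    _ ≤ _ := by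
        rw [← Set.ncard_coe_finset {S ∈ smalls | #S = 2}]
        exact Nat.add_le_add_left ((Set.ncard_le_ncard hpairs (Set.toFinite _)).trans
          (Set.ncard_image_le (Set.toFinite _))) _

end UnionOfParts

theorem stmt7_general {V : Type*} [Fintype V] [DecidableEq V] (E : V → V → Prop)
    (P : Finpartition (Finset.univ : Finset V))
    (hP : Extreme E P) (U : Finset V)
    (hU : ∀ v : V, v ∈ U ↔ ∃ S ∈ P.parts, v ∈ S ∧ S.card ≤ 2) :
    ∃ M : (auxGraph E U).Subgraph, IsMaxMatching (auxGraph E U) M ∧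
      (∀ a b : ↥U, M.Adj a b ↔ a ≠ b ∧ ∃ S ∈ P.parts, a.1 ∈ S ∧ b.1 ∈ S) ∧
      dichi ↥U (inducedRel E U) = U.card - matchNum (auxGraph E U) := by
  obtain ⟨hPcol, hPopt, -⟩ := hP
  have hdichi := dichi_induced_eq_card_filter hPcol hPopt _ hU
  have hupper : ∀ M' : (auxGraph E U).Subgraph, M'.IsMatching →
      dichi U (inducedRel E U) + M'.edgeSet.ncard ≤ U.card := fun M' hM' => by
    simpa using dichi_add_ncard_edgeSet_le (E := inducedRel E U) (H := auxGraph E U)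
      (fun a => hPcol.not_rel_self a.1) (fun a b h => h.2) hM'
  have hlower := card_le_card_filter_add_ncard_edgeSet hPcol hU
  have hmatch := isMatching_samePartSubgraph hPcol hU
  have hmax : IsMaxMatching _ (samePartSubgraph P U hPcol) :=
    ⟨hmatch, fun M' hM' => by have := hupper M' hM'; omega⟩
  refine ⟨samePartSubgraph P U hPcol, hmax, fun a b => Iff.rfl, ?_⟩
  have := hupper _ hmatch
  rw [matchNum_eq_ncard_edgeSet hmax]
  omega

theorem stmt7 {V : Type*} [Fintype V] [DecidableEq V] (E : V → V → Prop)
    (hirr : Irreflexive E) (P : Finpartition (Finset.univ : Finset V))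
    (hP : Extreme E P) (U : Finset V)
    (hU : ∀ v : V, v ∈ U ↔ ∃ S ∈ P.parts, v ∈ S ∧ S.card ≤ 2) :
    ∃ M : (auxGraph E U).Subgraph, IsMaxMatching (auxGraph E U) M ∧
      (∀ a b : ↥U, M.Adj a b ↔ a ≠ b ∧ ∃ S ∈ P.parts, a.1 ∈ S ∧ b.1 ∈ S) ∧
      dichi ↥U (inducedRel E U) = U.card - matchNum (auxGraph E U) :=
  stmt7_general E P hP U hU
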